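/- (Case a < 0, b > 2.) Let a < 0, b > 2, α > 0, δ > 0, μ > 0, κ < 0, T > 0, and let q₁, q₂, p₁, p₂ : [0, T) → ℝ be differentiable functions satisfying the 2-peakon ODE system with parameters a, b, with initial data p₁(0) = α, p₂(0) = α + δ, q₁(0) = 0, q₂(0) = μ. Suppose that for all t ∈ [0, T): p₁(t) > 0, p₂(t) > 0, 0 < q₂(t) − q₁(t) ≤ μ, and L_a(q₂(t) − q₁(t)) ≤ κ, where L_a(r) = 1 − a − (1 − 3a)e^{−2r}. Then for all t ∈ [0, T): (p₂² − p₁²)′(t) > 0 and (q₂ − q₁)′(t) ≤ κ(2αδ + δ²) < 0. -/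

import Mathlib

open Real Set

/-- The 2-peakon ODE system with parameters `a`, `b`, holding (in the sense of derivatives
within `[0, T)`) at every point of `[0, T)`. `Real.sign` plays the role of `sgn`. -/
def PeakonODEOn (a b T : ℝ) (q₁ q₂ p₁ p₂ : ℝ → ℝ) : Prop :=
  ∀ t ∈ Set.Ico (0 : ℝ) T,
    HasDerivWithinAt q₁ ((1 - a) * p₁ t ^ 2 + 2 * p₁ t * p₂ t * Real.exp (-|q₁ t - q₂ t|)
      + (1 - 3 * a) * p₂ t ^ 2 * Real.exp (-(2 * |q₁ t - q₂ t|))) (Set.Ico 0 T) t ∧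
    HasDerivWithinAt q₂ ((1 - a) * p₂ t ^ 2 + 2 * p₁ t * p₂ t * Real.exp (-|q₁ t - q₂ t|)
      + (1 - 3 * a) * p₁ t ^ 2 * Real.exp (-(2 * |q₁ t - q₂ t|))) (Set.Ico 0 T) t ∧
    HasDerivWithinAt p₁ ((2 - b) * Real.sign (q₂ t - q₁ t) * p₁ t * p₂ t * Real.exp (-|q₁ t - q₂ t|)
      * (p₁ t + p₂ t * Real.exp (-|q₁ t - q₂ t|))) (Set.Ico 0 T) t ∧
    HasDerivWithinAt p₂ ((2 - b) * Real.sign (q₁ t - q₂ t) * p₁ t * p₂ t * Real.exp (-|q₁ t - q₂ t|)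
      * (p₁ t * Real.exp (-|q₁ t - q₂ t|) + p₂ t)) (Set.Ico 0 T) t

/-- `L_a(r) = 1 - a - (1 - 3a)e^{-2r}`. -/
noncomputable def Lfun (a r : ℝ) : ℝ := 1 - a - (1 - 3 * a) * Real.exp (-(2 * r))

theorem case3_collision (a b α δ μ κ T : ℝ)
    (ha : a < 0) (hb : 2 < b) (hα : 0 < α) (hδ : 0 < δ) (hμ : 0 < μ) (hκ : κ < 0) (hT : 0 < T)
    (q₁ q₂ p₁ p₂ : ℝ → ℝ)
    (hsys : PeakonODEOn a b T q₁ q₂ p₁ p₂)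
    (hp₁0 : p₁ 0 = α) (hp₂0 : p₂ 0 = α + δ) (hq₁0 : q₁ 0 = 0) (hq₂0 : q₂ 0 = μ)
    (hp₁pos : ∀ t ∈ Set.Ico (0 : ℝ) T, 0 < p₁ t)
    (hp₂pos : ∀ t ∈ Set.Ico (0 : ℝ) T, 0 < p₂ t)
    (hqrange : ∀ t ∈ Set.Ico (0 : ℝ) T, 0 < q₂ t - q₁ t ∧ q₂ t - q₁ t ≤ μ)
    (hL : ∀ t ∈ Set.Ico (0 : ℝ) T, Lfun a (q₂ t - q₁ t) ≤ κ) :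
    ∀ t ∈ Set.Ico (0 : ℝ) T,
      (∃ d : ℝ, HasDerivWithinAt (fun s => p₂ s ^ 2 - p₁ s ^ 2) d (Set.Ico 0 T) t ∧ 0 < d) ∧
      (∃ d : ℝ, HasDerivWithinAt (fun s => q₂ s - q₁ s) d (Set.Ico 0 T) t ∧
        d ≤ κ * (2 * α * δ + δ ^ 2) ∧ κ * (2 * α * δ + δ ^ 2) < 0) := by
  -- derivative of p₂² - p₁²
  have key : ∀ t ∈ Set.Ico (0 : ℝ) T, HasDerivWithinAt (fun s => p₂ s ^ 2 - p₁ s ^ 2)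
      (2 * (b - 2) * p₁ t * p₂ t * Real.exp (-(q₂ t - q₁ t)) *
        (p₁ t ^ 2 + 2 * p₁ t * p₂ t * Real.exp (-(q₂ t - q₁ t)) + p₂ t ^ 2))
      (Set.Ico 0 T) t := by
    intro t ht
    obtain ⟨hq1, hq2, hp1, hp2⟩ := hsys t ht
    have hQ := (hqrange t ht).1
    have habs : |q₁ t - q₂ t| = q₂ t - q₁ t := by
      rw [abs_sub_comm]; exact abs_of_pos hQ
    have hs1 : Real.sign (q₂ t - q₁ t) = 1 := Real.sign_of_pos hQ
    have hs2 : Real.sign (q₁ t - q₂ t) = -1 := Real.sign_of_neg (by linarith)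
    have h := (hp2.fun_pow 2).fun_sub (hp1.fun_pow 2)
    refine h.congr_deriv ?_
    rw [habs, hs1, hs2]
    push_cast
    ring
  have dpos : ∀ t ∈ Set.Ico (0 : ℝ) T,
      0 < 2 * (b - 2) * p₁ t * p₂ t * Real.exp (-(q₂ t - q₁ t)) *
        (p₁ t ^ 2 + 2 * p₁ t * p₂ t * Real.exp (-(q₂ t - q₁ t)) + p₂ t ^ 2) := by
    intro t ht
    have h1 := hp₁pos t ht
    have h2 := hp₂pos t ht
    have hE := Real.exp_pos (-(q₂ t - q₁ t))
    have hb2 : (0:ℝ) < 2 * (b - 2) := by linarith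
    have hsum : 0 < p₁ t ^ 2 + 2 * p₁ t * p₂ t * Real.exp (-(q₂ t - q₁ t)) + p₂ t ^ 2 := by
      positivity
    positivity
  have cont : ContinuousOn (fun s => p₂ s ^ 2 - p₁ s ^ 2) (Set.Ico 0 T) :=
    fun t ht => (key t ht).continuousWithinAt
  have mono : StrictMonoOn (fun s => p₂ s ^ 2 - p₁ s ^ 2) (Set.Ico 0 T) := by
    apply strictMonoOn_of_deriv_pos (convex_Ico 0 T) cont
    intro x hx
    rw [interior_Ico] at hx
    have hxS : x ∈ Set.Ico (0:ℝ) T := Ioo_subset_Ico_self hx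
    have h := (key x hxS).hasDerivAt (Ico_mem_nhds hx.1 hx.2)
    rw [h.deriv]
    exact dpos x hxS
  have hc : (0:ℝ) < 2 * α * δ + δ ^ 2 := by positivity
  have flb : ∀ t ∈ Set.Ico (0 : ℝ) T, 2 * α * δ + δ ^ 2 ≤ p₂ t ^ 2 - p₁ t ^ 2 := by
    intro t ht
    have h0 : (0:ℝ) ∈ Set.Ico (0:ℝ) T := ⟨le_refl 0, hT⟩
    have f0 : p₂ 0 ^ 2 - p₁ 0 ^ 2 = 2 * α * δ + δ ^ 2 := by rw [hp₁0, hp₂0]; ring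
    rcases eq_or_lt_of_le ht.1 with h | h
    · rw [← h]; rw [f0]
    · have := mono h0 ht h
      simp only at this
      linarith [f0]
  intro t ht
  refine ⟨⟨_, key t ht, dpos t ht⟩, ?_⟩
  obtain ⟨hq1, hq2, hp1, hp2⟩ := hsys t ht
  refine ⟨_, hq2.sub hq1, ?_, mul_neg_of_neg_of_pos hκ hc⟩
  have hQ := (hqrange t ht).1
  have habs : |q₁ t - q₂ t| = q₂ t - q₁ t := by
    rw [abs_sub_comm]; exact abs_of_pos hQ
  have hLt : 1 - a - (1 - 3 * a) * Real.exp (-(2 * (q₂ t - q₁ t))) ≤ κ := hL t ht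
  have hflb := flb t ht
  have hf : 0 < p₂ t ^ 2 - p₁ t ^ 2 := lt_of_lt_of_le hc hflb
  rw [habs]
  have step1 : (p₂ t ^ 2 - p₁ t ^ 2) * (1 - a - (1 - 3 * a) * Real.exp (-(2 * (q₂ t - q₁ t))))
      ≤ (p₂ t ^ 2 - p₁ t ^ 2) * κ := mul_le_mul_of_nonneg_left hLt hf.le
  have step2 : (p₂ t ^ 2 - p₁ t ^ 2) * κ ≤ (2 * α * δ + δ ^ 2) * κ :=
    mul_le_mul_of_nonpos_right hflb hκ.le
  nlinarith [step1, step2]
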